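/- Let (A,I) be a finite independence alphabet and let φ be an endomorphism of the trace monoid M(A,I) satisfying: for all letters a,b,c ∈ A, if c is a prefix of φ(b) and c ∼_I φ(a), then (a,b) ∈ I. Then r(φ(u),φ(v)) ≥ r(u,v) for all u,v ∈ M(A,I), where r measures the length of the longest common prefix of Foata normal forms. -/

import Mathlib

/-- The defining relation of the trace monoid: `ab = ba` whenever `(a,b) ∈ I`. -/
def traceRel (A : Type) (I : A → A → Prop) : FreeMonoid A → FreeMonoid A → Prop :=
  fun x y => ∃ a b : A, I a b ∧ x = FreeMonoid.of a * FreeMonoid.of b ∧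
    y = FreeMonoid.of b * FreeMonoid.of a

/-- The congruence on the free monoid generated by the trace relations. -/
def traceCon (A : Type) (I : A → A → Prop) : Con (FreeMonoid A) :=
  conGen (traceRel A I)

/-- The trace monoid `M(A,I)`, the quotient of the free monoid on `A` by the
congruence generated by `{(ab, ba) : (a,b) ∈ I}`. -/
abbrev TraceMonoid (A : Type) (I : A → A → Prop) := (traceCon A I).Quotient



/-- The image in the trace monoid of a letter `a ∈ A`. -/
def traceOf (A : Type) (I : A → A → Prop) (a : A) : TraceMonoid A I :=
  (traceCon A I).mk' (FreeMonoid.of a)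

/-- The set of letters which are periodic points of the endomorphism `φ`. -/
def perLetters (A : Type) (I : A → A → Prop) (φ : Monoid.End (TraceMonoid A I)) : Set A :=
  {a : A | ∃ n : ℕ, 1 ≤ n ∧ (φ ^ n) (traceOf A I a) = traceOf A I a}

/-- A clique of the independence graph: a nonempty set of letters that pairwise
commute (are pairwise independent). -/
def IsClique (A : Type) (I : A → A → Prop) (B : Finset A) : Prop :=
  B.Nonempty ∧ ∀ a ∈ B, ∀ b ∈ B, a ≠ b → I a b

/-- `w_B`: the product in the trace monoid of all letters of `B`. -/
noncomputable def wB (A : Type) (I : A → A → Prop) (B : Finset A) : TraceMonoid A I :=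
  (B.toList.map (traceOf A I)).prod

/-- The product `w_{B₁} ⋯ w_{B_k}` associated with a list of cliques. -/
noncomputable def wProd (A : Type) (I : A → A → Prop) (L : List (Finset A)) :
    TraceMonoid A I :=
  (L.map (wB A I)).prod

/-- A list `[B₁, …, B_k]` is a Foata chain if each `B_i` is a clique and, for every
`i ≥ 2` and every `a ∈ B_i`, there is some `b ∈ B_{i-1}` with `(a,b) ∉ I`. -/
def IsFoataChain (A : Type) (I : A → A → Prop) (L : List (Finset A)) : Prop :=
  (∀ B ∈ L, IsClique A I B) ∧
    ∀ i : ℕ, (hi : i + 1 < L.length) →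
      ∀ a ∈ L[i + 1], ∃ b ∈ L[i], ¬ I a b

/-- `[B₁, …, B_k]` is the Foata normal form of `u` if it is a Foata chain whose
product is `u`. (Such a list exists and is unique for every `u`.) -/
def IsFNF (A : Type) (I : A → A → Prop) (L : List (Finset A)) (u : TraceMonoid A I) :
    Prop :=
  IsFoataChain A I L ∧ u = wProd A I L

/-- For `u ≠ v`, `rNat u v` is the largest `k` such that the Foata normal forms of
`u` and `v` have the same first `k` components. -/
noncomputable def rNat (A : Type) (I : A → A → Prop) (u v : TraceMonoid A I) : ℕ :=
  sSup {k : ℕ | ∃ P Lu Lv : List (Finset A), P.length = k ∧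
    IsFNF A I (P ++ Lu) u ∧ IsFNF A I (P ++ Lv) v}

open Classical

/-- `r(u,v) ∈ ℕ ∪ {∞}`: the length of the longest common prefix of the Foata normal
forms of `u` and `v`, with `r(u,u) = ∞`. -/
noncomputable def rE (A : Type) (I : A → A → Prop) (u v : TraceMonoid A I) : ℕ∞ :=
  if u = v then ⊤ else (rNat A I u v : ℕ∞)

/-- The Foata normal form metric: `d(u,v) = 2^{-r(u,v)}`, with `2^{-∞} = 0`. -/
noncomputable def dFNF (A : Type) (I : A → A → Prop) (u v : TraceMonoid A I) : ℝ :=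
  if u = v then 0 else (2 : ℝ) ^ (-(rNat A I u v : ℤ))

/-- The content of a trace: the set of letters occurring in (any representative of) it. -/
def content (A : Type) (I : A → A → Prop) (u : TraceMonoid A I) : Set A :=
  {a : A | ∃ w : FreeMonoid A, (traceCon A I).mk' w = u ∧ a ∈ FreeMonoid.toList w}

/-!
The minimal letters of a trace form the first block of its Foata normal form. Let
`u = w_{B₁} ⋯ w_{B_k} u'` be in Foata normal form and `q` a trace. If `φ` kills every letter
of `B₁`, the hypothesis on `φ` forces it to kill every letter depending on a killed one, hence
all of `u`. Otherwise the minimal letters of `q φ(u)` are those of `y = q φ(w_{B₁})`: a minimal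
letter `c` contributed by `φ(w_{B₂} ⋯ u')` is minimal in `φ(b)` for a minimal letter `b` of
`w_{B₂} ⋯ u'`; `b` depends on some `b' ∈ B₁`, and `c` would be independent of `φ(b')`,
contradicting the hypothesis. So the first Foata block of `q φ(u)` is `min y` whatever follows
`B₁`, and induction on `k` (replacing `q` by `y` stripped of that block) shows that `φ(u)` and
`φ(v)` coincide or share `k` Foata blocks whenever `u` and `v` do.
-/

namespace TraceMonoid

open FreeMonoid

variable {A : Type} {I : A → A → Prop}

lemma traceCon_le {c : Con (FreeMonoid A)} (h : ∀ a b, I a b → c (of a * of b) (of b * of a)) :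
    traceCon A I ≤ c :=
  Con.conGen_le.mpr (by rintro _ _ ⟨a, b, hab, rfl, rfl⟩; exact h a b hab)

@[elab_as_elim]
lemma induction_on {p : TraceMonoid A I → Prop} (x : TraceMonoid A I) (one : p 1)
    (traceOf_mul : ∀ a x, p x → p (traceOf A I a * x)) : p x := by
  obtain ⟨w, rfl⟩ := (traceCon A I).mk'_surjective x
  induction w using FreeMonoid.inductionOn' with
  | one => simpa using one
  | of_mul a w ih => simpa [traceOf] using traceOf_mul a _ ih

lemma traceOf_mul_traceOf_comm {a b : A} (h : I a b) :
    traceOf A I a * traceOf A I b = traceOf A I b * traceOf A I a := by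
  simp only [traceOf, ← map_mul]
  exact (Con.eq _).mpr (ConGen.Rel.of _ _ ⟨a, b, h, rfl, rfl⟩)

def permCon (A : Type) : Con (FreeMonoid A) where
  r w w' := w.toList.Perm w'.toList
  iseqv := ⟨fun _ => .refl _, .symm, .trans⟩
  mul' h₁ h₂ := by simpa only [toList_mul] using h₁.append h₂

lemma toList_perm_of_coe_eq {w w' : FreeMonoid A} (h : (w : TraceMonoid A I) = w') :
    w.toList.Perm w'.toList :=
  traceCon_le (c := permCon A) (fun a b _ => .swap b a []) ((Con.eq _).mp h)

noncomputable def length (x : TraceMonoid A I) : ℕ :=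
  Con.liftOn x (fun w => w.toList.length)
    (fun _ _ h => (toList_perm_of_coe_eq ((Con.eq _).mpr h)).length_eq)

@[simp]
lemma coe_of (a : A) : ((of a : FreeMonoid A) : TraceMonoid A I) = traceOf A I a := rfl

lemma length_mul (x y : TraceMonoid A I) : length (x * y) = length x + length y := by
  induction x using Con.induction_on with | _ w =>
  induction y using Con.induction_on with | _ w' =>
  simp [← Con.coe_mul, length, toList_mul]

@[simp]
lemma length_traceOf (a : A) : length (traceOf A I a) = 1 := rfl

lemma length_prod_traceOf (l : List A) : length (l.map (traceOf A I)).prod = l.length := by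
  induction l with
  | nil => rfl
  | cons a l ih => simp [length_mul, ih, add_comm]

lemma content_coe (w : FreeMonoid A) : content A I (w : TraceMonoid A I) = {a | a ∈ w.toList} :=
  Set.ext fun _ =>
    ⟨fun ⟨_, hw, ha⟩ => (toList_perm_of_coe_eq hw).mem_iff.mp ha, fun ha => ⟨w, rfl, ha⟩⟩

lemma content_mul (x y : TraceMonoid A I) :
    content A I (x * y) = content A I x ∪ content A I y := by
  induction x using Con.induction_on with | _ w =>
  induction y using Con.induction_on with | _ w' =>
  ext
  simp [← Con.coe_mul, content_coe]

@[simp]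
lemma content_traceOf (a : A) : content A I (traceOf A I a) = {a} := by
  simp [← coe_of, content_coe]

@[simp]
lemma content_one : content A I (1 : TraceMonoid A I) = ∅ := by
  simpa using content_coe (I := I) 1

lemma content_finite (x : TraceMonoid A I) : (content A I x).Finite := by
  induction x using Con.induction_on with | _ w =>
  rw [content_coe]
  exact List.finite_toSet w.toList

lemma eq_one_of_content_eq_empty {x : TraceMonoid A I} (h : content A I x = ∅) : x = 1 := by
  induction x using Con.induction_on with | _ w =>
  rw [content_coe, Set.eq_empty_iff_forall_notMem] at h
  rw [← ofList_toList w, List.eq_nil_iff_forall_not_mem.mpr h]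
  rfl

lemma subset_content_prod {l : List (TraceMonoid A I)} {x : TraceMonoid A I} (hx : x ∈ l) :
    content A I x ⊆ content A I l.prod := by
  induction l with
  | nil => simp at hx
  | cons y l ih =>
    rw [List.prod_cons, content_mul]
    rcases List.mem_cons.mp hx with rfl | hx
    · exact Set.subset_union_left
    · exact (ih hx).trans Set.subset_union_right

lemma coe_ofList_cons (c : A) (w : List A) :
    ((ofList (c :: w) : FreeMonoid A) : TraceMonoid A I) =
      traceOf A I c * (ofList w : FreeMonoid A) := by
  rw [ofList_cons, Con.coe_mul, coe_of]

lemma coe_ofList_swap {b c : A} (hbc : I b c) (u v : List A) :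
    ((ofList (u ++ b :: c :: v) : FreeMonoid A) : TraceMonoid A I) =
      (ofList (u ++ c :: b :: v) : FreeMonoid A) := by
  simp only [ofList_append, ofList_cons, Con.coe_mul, coe_of]
  rw [← mul_assoc (traceOf A I b), traceOf_mul_traceOf_comm hbc, mul_assoc]

/-- The word with its first `a` deleted, provided only letters independent of `a` precede it.
Its invariance under the trace congruence (`residual_eq_of_coe_eq`) is the cancellation
property of traces behind `mem_minLetters_traceOf_mul_iff`. -/
noncomputable def residual (I : A → A → Prop) (a : A) : List A → Option (TraceMonoid A I)
  | [] => none
  | c :: w =>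
    if c = a then some (ofList w : FreeMonoid A)
    else if I a c then (residual I a w).map (traceOf A I c * ·) else none

lemma coe_ofList_eq_of_residual_eq_some {a : A} {w : List A} {r : TraceMonoid A I}
    (h : residual I a w = some r) :
    ((ofList w : FreeMonoid A) : TraceMonoid A I) = traceOf A I a * r := by
  induction w generalizing r with
  | nil => simp [residual] at h
  | cons c w ih =>
    by_cases hca : c = a
    · subst hca
      simp_all [residual]
    by_cases hac : I a c
    · simp only [residual, hca, hac, if_false, if_true, Option.map_eq_some_iff] at h
      obtain ⟨r', hr', rfl⟩ := h
      rw [coe_ofList_cons, ih hr', ← mul_assoc, ← mul_assoc, traceOf_mul_traceOf_comm hac]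
    · simp [residual, hca, hac] at h

lemma residual_swap (hsym : Symmetric I) (a : A) {b c : A} (hbc : I b c) (u v : List A) :
    residual I a (u ++ b :: c :: v) = residual I a (u ++ c :: b :: v) := by
  induction u with
  | nil =>
    by_cases hb : b = a
    · by_cases hc : c = a
      · subst hb hc; rfl
      subst hb
      simp [residual, hc, hbc]
    by_cases hc : c = a
    · subst hc
      simp [residual, hb, hsym hbc]
    by_cases hab : I a b <;> by_cases hac : I a c <;>
      simp [residual, hb, hc, hab, hac, traceOf_mul_traceOf_comm hbc]
  | cons d u ih =>
    by_cases hd : d = a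
    · simp only [residual, List.cons_append, hd, if_true, coe_ofList_swap hbc]
    · simp [residual, hd, ih]

def residualCon (I : A → A → Prop) : Con (FreeMonoid A) where
  r w w' := ∀ a (u v : FreeMonoid A),
    residual I a (u * w * v).toList = residual I a (u * w' * v).toList
  iseqv := ⟨fun _ _ _ _ => rfl, fun h a u v => (h a u v).symm,
    fun h₁ h₂ a u v => (h₁ a u v).trans (h₂ a u v)⟩
  mul' {w w' x x'} h₁ h₂ a u v := by
    have h₁' := h₁ a u (x * v)
    have h₂' := h₂ a (u * w') v
    simp only [mul_assoc] at h₁' h₂' ⊢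
    exact h₁'.trans h₂'

lemma residual_eq_of_coe_eq (hsym : Symmetric I) {w w' : FreeMonoid A}
    (h : (w : TraceMonoid A I) = w') (a : A) : residual I a w.toList = residual I a w'.toList := by
  have hle : traceCon A I ≤ residualCon I := traceCon_le fun b c hbc a u v => by
    simpa [toList_mul] using residual_swap hsym a hbc u.toList v.toList
  simpa using hle ((Con.eq _).mp h) a 1 1

def minLetters (x : TraceMonoid A I) : Set A := {a | ∃ y, x = traceOf A I a * y}

lemma mem_minLetters_traceOf_mul (a : A) (y : TraceMonoid A I) :
    a ∈ minLetters (traceOf A I a * y) :=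
  ⟨y, rfl⟩

lemma minLetters_subset_content (x : TraceMonoid A I) : minLetters x ⊆ content A I x := by
  rintro a ⟨y, rfl⟩
  simp [content_mul]

lemma minLetters_finite (x : TraceMonoid A I) : (minLetters x).Finite :=
  (content_finite x).subset (minLetters_subset_content x)

@[simp]
lemma minLetters_one : minLetters (1 : TraceMonoid A I) = ∅ :=
  Set.subset_empty_iff.mp (content_one (I := I) ▸ minLetters_subset_content 1)

lemma minLetters_nonempty {x : TraceMonoid A I} (hx : x ≠ 1) : (minLetters x).Nonempty := by
  induction x using induction_on with
  | one => exact absurd rfl hx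
  | traceOf_mul a y _ => exact ⟨a, mem_minLetters_traceOf_mul a y⟩

lemma minLetters_subset_mul (x y : TraceMonoid A I) : minLetters x ⊆ minLetters (x * y) := by
  rintro a ⟨x', rfl⟩
  exact ⟨x' * y, mul_assoc _ _ _⟩

lemma traceOf_mul_comm_of_indep {a : A} {x : TraceMonoid A I} (h : ∀ c ∈ content A I x, I a c) :
    traceOf A I a * x = x * traceOf A I a := by
  induction x using induction_on with
  | one => simp
  | traceOf_mul c x ih =>
    simp only [content_mul, content_traceOf, Set.mem_union, Set.mem_singleton_iff] at h
    rw [← mul_assoc, traceOf_mul_traceOf_comm (h c (.inl rfl)), mul_assoc,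
      ih fun d hd => h d (.inr hd), mul_assoc]

lemma mem_minLetters_mul_of_indep {a : A} {x y : TraceMonoid A I} (ha : a ∈ minLetters y)
    (h : ∀ c ∈ content A I x, I a c) : a ∈ minLetters (x * y) := by
  obtain ⟨y', rfl⟩ := ha
  exact ⟨x * y', by rw [← mul_assoc, ← traceOf_mul_comm_of_indep h, mul_assoc]⟩

lemma content_prod_traceOf (l : List A) :
    content A I (l.map (traceOf A I)).prod = {a | a ∈ l} := by
  induction l with
  | nil => simp
  | cons a l ih => ext; simp [content_mul, ih]

@[simp]
lemma content_wB (B : Finset A) : content A I (wB A I B) = B := by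
  simp [wB, content_prod_traceOf]

@[simp]
lemma length_wB (B : Finset A) : length (wB A I B) = B.card := by
  simp [wB, length_prod_traceOf]

lemma wB_insert {a : A} {B : Finset A} (ha : a ∉ B) (hB : (insert a B : Set A).Pairwise I) :
    wB A I (insert a B) = traceOf A I a * wB A I B := by
  have hcomm : ((insert a B).toList.map (traceOf A I)).Pairwise Commute :=
    List.pairwise_map.mpr <| (insert a B).nodup_toList.imp_of_mem fun hx hy hxy =>
      traceOf_mul_traceOf_comm (hB (by simpa using hx) (by simpa using hy) hxy)
  rw [wB, ((Finset.toList_insert ha).map _).prod_eq' hcomm, List.map_cons, List.prod_cons, wB]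

lemma mem_minLetters_wB {a : A} {B : Finset A} (hB : (B : Set A).Pairwise I) (ha : a ∈ B) :
    a ∈ minLetters (wB A I B) := by
  rw [← Finset.insert_erase ha, wB_insert (Finset.notMem_erase a B) (by simpa [ha] using hB)]
  exact mem_minLetters_traceOf_mul _ _

section

variable (hsym : Symmetric I)
include hsym

lemma mem_minLetters_traceOf_mul_iff {a c : A} {z : TraceMonoid A I} :
    a ∈ minLetters (traceOf A I c * z) ↔ a = c ∨ I a c ∧ a ∈ minLetters z := by
  refine ⟨fun ⟨y, hy⟩ => ?_, ?_⟩
  · by_cases hac : a = c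
    · exact .inl hac
    induction z using Con.induction_on with | _ z =>
    induction y using Con.induction_on with | _ y =>
    have h := residual_eq_of_coe_eq hsym (w := of c * z) (w' := of a * y) hy a
    simp only [toList_mul, toList_of, List.singleton_append, residual, Ne.symm hac, if_true,
      if_false] at h
    by_cases hI : I a c
    · simp only [hI, if_true, Option.map_eq_some_iff] at h
      obtain ⟨r, hr, -⟩ := h
      refine .inr ⟨hI, r, ?_⟩
      simpa using coe_ofList_eq_of_residual_eq_some hr
    · simp [hI] at h
  · rintro (rfl | ⟨hI, ha⟩)
    · exact mem_minLetters_traceOf_mul a z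
    · exact mem_minLetters_mul_of_indep ha (by simpa using hI)

lemma indep_of_mem_minLetters {a b : A} {x : TraceMonoid A I} (ha : a ∈ minLetters x)
    (hb : b ∈ minLetters x) (hab : a ≠ b) : I a b := by
  obtain ⟨y, rfl⟩ := hb
  exact (((mem_minLetters_traceOf_mul_iff hsym).mp ha).resolve_left hab).1

lemma mem_minLetters_mul {a : A} {x y : TraceMonoid A I} (h : a ∈ minLetters (x * y)) :
    a ∈ minLetters x ∨ a ∈ minLetters y ∧ ∀ c ∈ content A I x, I a c := by
  induction x using induction_on with
  | one => simpa using h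
  | traceOf_mul c x ih =>
    rw [mul_assoc, mem_minLetters_traceOf_mul_iff hsym] at h
    rcases h with rfl | ⟨hac, h⟩
    · exact .inl (mem_minLetters_traceOf_mul a x)
    rcases ih h with hx | ⟨hy, hind⟩
    · exact .inl ((mem_minLetters_traceOf_mul_iff hsym).mpr (.inr ⟨hac, hx⟩))
    · refine .inr ⟨hy, ?_⟩
      simp only [content_mul, content_traceOf, Set.mem_union, Set.mem_singleton_iff]
      rintro d (rfl | hd)
      exacts [hac, hind d hd]

lemma exists_eq_wB_mul {D : Finset A} {x : TraceMonoid A I} (hD : (D : Set A) ⊆ minLetters x) :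
    ∃ x', x = wB A I D * x' := by
  induction D using Finset.induction_on generalizing x with
  | empty => exact ⟨x, by simp [wB]⟩
  | insert a D ha ih =>
    obtain ⟨y, rfl⟩ := hD (Finset.mem_insert_self a D)
    have hDy : (D : Set A) ⊆ minLetters y := fun b hb =>
      (((mem_minLetters_traceOf_mul_iff hsym).mp (hD (by simp [hb]))).resolve_left
        (ne_of_mem_of_not_mem hb ha)).2
    obtain ⟨x', rfl⟩ := ih hDy
    refine ⟨x', ?_⟩
    have hpair : (insert a D : Set A).Pairwise I := fun b hb c hc hbc =>
      indep_of_mem_minLetters hsym (hD (by simpa using hb)) (hD (by simpa using hc)) hbc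
    rw [wB_insert ha hpair, mul_assoc]

lemma eq_wB_minLetters_mul (x : TraceMonoid A I) :
    ∃ x', x = wB A I (minLetters_finite x).toFinset * x' :=
  exists_eq_wB_mul hsym (by simp)

end

@[simp]
lemma wProd_nil : wProd A I [] = 1 := rfl

@[simp]
lemma wProd_cons (B : Finset A) (L : List (Finset A)) :
    wProd A I (B :: L) = wB A I B * wProd A I L := by
  simp [wProd]

lemma isFoataChain_nil : IsFoataChain A I [] :=
  ⟨by simp, fun _ hi => by simp at hi⟩

lemma isFoataChain_cons {B : Finset A} {L : List (Finset A)} :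
    IsFoataChain A I (B :: L) ↔
      IsClique A I B ∧ (∀ C ∈ L.head?, ∀ a ∈ C, ∃ b ∈ B, ¬ I a b) ∧
        IsFoataChain A I L := by
  constructor
  · rintro ⟨hcl, hadj⟩
    refine ⟨hcl B (by simp), ?_, fun C hC => hcl C (by simp [hC]),
      fun i hi => hadj (i + 1) (by simp; omega)⟩
    cases L with
    | nil => simp
    | cons C L =>
      rintro _ ⟨⟩
      simpa using hadj 0 (by simp)
  · rintro ⟨hB, hhead, hcl, hadj⟩
    refine ⟨by simpa [hB] using hcl, ?_⟩
    rintro (_ | i) hi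
    · cases L with
      | nil => simp at hi
      | cons C L => simpa using hhead C rfl
    · simpa using hadj i (by simpa using hi)

lemma length_le_of_isFNF {L : List (Finset A)} {x : TraceMonoid A I} (h : IsFNF A I L x) :
    L.length ≤ length x := by
  induction L generalizing x with
  | nil => simp
  | cons B L ih =>
    obtain ⟨⟨hBne, -⟩, -, hL⟩ := isFoataChain_cons.mp h.1
    rw [h.2, wProd_cons, length_mul, length_wB, List.length_cons]
    have := ih ⟨hL, rfl⟩
    have := hBne.card_pos
    omega

lemma subset_minLetters_of_isFNF {C : Finset A} {L : List (Finset A)} {x : TraceMonoid A I}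
    (h : IsFNF A I (C :: L) x) : (C : Set A) ⊆ minLetters x := fun a ha => by
  rw [h.2, wProd_cons]
  exact minLetters_subset_mul _ _
    (mem_minLetters_wB (fun _ hb _ hc => (isFoataChain_cons.mp h.1).1.2 _ hb _ hc) ha)

lemma minLetters_wProd_cons_subset (hsym : Symmetric I) {C : Finset A} {L : List (Finset A)}
    (h : IsFoataChain A I (C :: L)) : minLetters (wProd A I (C :: L)) ⊆ C := by
  induction L generalizing C with
  | nil => simpa using minLetters_subset_content (wB A I C)
  | cons C' L ih =>
    intro a ha
    obtain ⟨-, hhead, hL⟩ := isFoataChain_cons.mp h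
    rcases mem_minLetters_mul hsym (wProd_cons C _ ▸ ha) with ha | ⟨ha, hind⟩
    · simpa using minLetters_subset_content _ ha
    · obtain ⟨b, hb, hab⟩ := hhead C' rfl a (ih hL ha)
      exact absurd (hind b (by simpa using hb)) hab

lemma exists_not_indep_of_mem_minLetters_wProd (hsym : Symmetric I) {B : Finset A}
    {L : List (Finset A)} (h : IsFoataChain A I (B :: L)) {a : A}
    (ha : a ∈ minLetters (wProd A I L)) : ∃ b ∈ B, ¬ I a b := by
  obtain ⟨-, hhead, hL⟩ := isFoataChain_cons.mp h
  cases L with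
  | nil => simp at ha
  | cons C L => exact hhead C rfl a (minLetters_wProd_cons_subset hsym hL ha)

section

variable (hsym : Symmetric I) (hirr : Irreflexive I)
include hsym hirr

lemma isFNF_wB_mul {D : Finset A} {R : List (Finset A)} {x : TraceMonoid A I}
    (hx : IsFNF A I R x) (hD : D.Nonempty) (hmin : (D : Set A) = minLetters (wB A I D * x)) :
    IsFNF A I (D :: R) (wB A I D * x) := by
  refine ⟨isFoataChain_cons.mpr ⟨⟨hD, fun a ha b hb hab => ?_⟩, ?_, hx.1⟩,
    by simp [hx.2]⟩
  · rw [← Finset.mem_coe, hmin] at ha hb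
    exact indep_of_mem_minLetters hsym ha hb hab
  cases R with
  | nil => simp
  | cons C R =>
    rintro _ ⟨⟩ a ha
    by_contra! hind
    have ha' : a ∈ minLetters (wB A I D * x) :=
      mem_minLetters_mul_of_indep (subset_minLetters_of_isFNF hx ha) (by simpa using hind)
    exact hirr a (hind a (by simpa [← hmin] using ha'))

lemma exists_isFNF (x : TraceMonoid A I) : ∃ L, IsFNF A I L x := by
  induction hn : length x using Nat.strong_induction_on generalizing x with
  | _ n ih =>
  by_cases hx : x = 1
  · exact ⟨[], isFoataChain_nil, hx⟩
  obtain ⟨x', hx'⟩ := eq_wB_minLetters_mul hsym x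
  have hD := (minLetters_finite x).toFinset_nonempty.mpr (minLetters_nonempty hx)
  have hlt : length x' < n := by
    rw [← hn, hx', length_mul, length_wB]
    have := hD.card_pos
    omega
  obtain ⟨R, hR⟩ := ih _ hlt x' rfl
  rw [hx']
  exact ⟨_, isFNF_wB_mul hsym hirr hR hD (by rw [← hx']; simp)⟩

def CommonFNFPrefix (k : ℕ) (x y : TraceMonoid A I) : Prop :=
  ∃ P Lx Ly : List (Finset A), P.length = k ∧ IsFNF A I (P ++ Lx) x ∧ IsFNF A I (P ++ Ly) y

lemma commonFNFPrefix_zero (x y : TraceMonoid A I) : CommonFNFPrefix 0 x y := by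
  obtain ⟨Lx, hx⟩ := exists_isFNF hsym hirr x
  obtain ⟨Ly, hy⟩ := exists_isFNF hsym hirr y
  exact ⟨[], Lx, Ly, rfl, hx, hy⟩

lemma CommonFNFPrefix.wB_mul {k : ℕ} {x y : TraceMonoid A I} (h : CommonFNFPrefix k x y)
    {D : Finset A} (hD : D.Nonempty) (hx : (D : Set A) = minLetters (wB A I D * x))
    (hy : (D : Set A) = minLetters (wB A I D * y)) :
    CommonFNFPrefix (k + 1) (wB A I D * x) (wB A I D * y) := by
  obtain ⟨P, Lx, Ly, rfl, hPx, hPy⟩ := h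
  exact ⟨D :: P, Lx, Ly, rfl, isFNF_wB_mul hsym hirr hPx hD hx,
    isFNF_wB_mul hsym hirr hPy hD hy⟩

end

lemma CommonFNFPrefix.le_length {k : ℕ} {x y : TraceMonoid A I} (h : CommonFNFPrefix k x y) :
    k ≤ length x := by
  obtain ⟨P, Lx, -, rfl, hPx, -⟩ := h
  have := length_le_of_isFNF hPx
  rw [List.length_append] at this
  omega

lemma rNat_le_rNat {u v x y : TraceMonoid A I}
    (h : ∀ k, CommonFNFPrefix k u v → CommonFNFPrefix k x y) : rNat A I u v ≤ rNat A I x y :=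
  csSup_le' fun k hk =>
    le_csSup ⟨length x, fun _ (hk : CommonFNFPrefix _ x y) => hk.le_length⟩ (h k hk)

section

variable {φ : Monoid.End (TraceMonoid A I)}

lemma content_apply_traceOf_subset {B : Finset A} {b : A} (hb : b ∈ B) :
    content A I (φ (traceOf A I b)) ⊆ content A I (φ (wB A I B)) := by
  rw [wB, map_list_prod, List.map_map]
  exact subset_content_prod (List.mem_map_of_mem (Finset.mem_toList.mpr hb))

lemma apply_wB_eq_one {B : Finset A} (hB : ∀ a ∈ B, φ (traceOf A I a) = 1) :
    φ (wB A I B) = 1 := by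
  rw [wB, map_list_prod, List.map_map]
  exact List.prod_eq_one (by simpa using hB)

variable (hcond : ∀ a b c : A,
  (∃ w : TraceMonoid A I, φ (traceOf A I b) = traceOf A I c * w) →
  (∀ x ∈ content A I (φ (traceOf A I a)), I c x) → I a b)
include hcond

lemma apply_traceOf_eq_one_of_not_indep {a b : A} (hb : φ (traceOf A I b) = 1) (hab : ¬ I b a) :
    φ (traceOf A I a) = 1 := by
  by_contra h
  obtain ⟨c, hc⟩ := minLetters_nonempty h
  exact hab (hcond b a c hc (by simp [hb]))

variable (hsym : Symmetric I)
include hsym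

lemma apply_wProd_eq_one {B : Finset A} {L : List (Finset A)} (h : IsFoataChain A I (B :: L))
    (hB : ∀ a ∈ B, φ (traceOf A I a) = 1) : φ (wProd A I (B :: L)) = 1 := by
  induction L generalizing B with
  | nil => simp [apply_wB_eq_one hB]
  | cons C L ih =>
    obtain ⟨-, hhead, hL⟩ := isFoataChain_cons.mp h
    have hC : ∀ a ∈ C, φ (traceOf A I a) = 1 := fun a ha => by
      obtain ⟨b, hb, hab⟩ := hhead C rfl a ha
      exact apply_traceOf_eq_one_of_not_indep hcond (hB b hb) fun h => hab (hsym h)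
    rw [wProd_cons, map_mul, ih hL hC, apply_wB_eq_one hB, one_mul]

lemma exists_mem_minLetters_apply {x : TraceMonoid A I} {c : A} (hc : c ∈ minLetters (φ x)) :
    ∃ b ∈ minLetters x, c ∈ minLetters (φ (traceOf A I b)) := by
  induction x using induction_on with
  | one => simp at hc
  | traceOf_mul a x ih =>
    rw [map_mul] at hc
    rcases mem_minLetters_mul hsym hc with hc | ⟨hc, hind⟩
    · exact ⟨a, mem_minLetters_traceOf_mul a x, hc⟩
    · obtain ⟨b, hb, hcb⟩ := ih hc
      have hab := hcond a b c hcb hind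
      exact ⟨b, mem_minLetters_mul_of_indep hb (by simpa using hsym hab), hcb⟩

lemma minLetters_mul_apply_wProd {B : Finset A} {L : List (Finset A)}
    (h : IsFoataChain A I (B :: L)) {y : TraceMonoid A I}
    (hy : content A I (φ (wB A I B)) ⊆ content A I y) :
    minLetters (y * φ (wProd A I L)) = minLetters y := by
  refine Set.Subset.antisymm (fun c hc => ?_) (minLetters_subset_mul _ _)
  rcases mem_minLetters_mul hsym hc with hc | ⟨hc, hind⟩
  · exact hc
  obtain ⟨b, hb, hcb⟩ := exists_mem_minLetters_apply hcond hsym hc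
  obtain ⟨b', hb', hbb'⟩ := exists_not_indep_of_mem_minLetters_wProd hsym h hb
  have hb'y := (content_apply_traceOf_subset (φ := φ) hb').trans hy
  exact absurd (hsym (hcond b' b c hcb fun x hx => hind x (hb'y hx))) hbb'

variable (hirr : Irreflexive I)
include hirr

theorem eq_or_commonFNFPrefix (P : List (Finset A)) {Ls Lt : List (Finset A)}
    (hs : IsFoataChain A I (P ++ Ls)) (ht : IsFoataChain A I (P ++ Lt)) (q : TraceMonoid A I) :
    q * φ (wProd A I (P ++ Ls)) = q * φ (wProd A I (P ++ Lt)) ∨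
      CommonFNFPrefix P.length (q * φ (wProd A I (P ++ Ls))) (q * φ (wProd A I (P ++ Lt))) := by
  induction P generalizing q with
  | nil => exact .inr (commonFNFPrefix_zero hsym hirr _ _)
  | cons B P ih =>
    simp only [List.cons_append] at hs ht ⊢
    by_cases hdead : ∀ a ∈ B, φ (traceOf A I a) = 1
    · left
      rw [apply_wProd_eq_one hcond hsym hs hdead, apply_wProd_eq_one hcond hsym ht hdead]
    push Not at hdead
    obtain ⟨a, ha, hφa⟩ := hdead
    obtain ⟨y, hyB⟩ : ∃ y, y = q * φ (wB A I B) := ⟨_, rfl⟩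
    have hBy : content A I (φ (wB A I B)) ⊆ content A I y := by simp [hyB, content_mul]
    have hy : y ≠ 1 := by
      rintro rfl
      exact hφa <| eq_one_of_content_eq_empty <| by
        simpa using (content_apply_traceOf_subset ha).trans hBy
    obtain ⟨y', hy'⟩ := eq_wB_minLetters_mul hsym y
    set D := (minLetters_finite y).toFinset
    have hD : D.Nonempty := (minLetters_finite y).toFinset_nonempty.mpr (minLetters_nonempty hy)
    have hsplit (L : List (Finset A)) :
        q * φ (wProd A I (B :: L)) = wB A I D * (y' * φ (wProd A I L)) := by
      rw [wProd_cons, map_mul, ← mul_assoc, ← hyB, hy', mul_assoc]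
    have hmin {L : List (Finset A)} (hL : IsFoataChain A I (B :: L)) :
        (D : Set A) = minLetters (wB A I D * (y' * φ (wProd A I L))) := by
      rw [← mul_assoc, ← hy', minLetters_mul_apply_wProd hcond hsym hL hBy]
      simp [D]
    rw [hsplit, hsplit]
    rcases ih (isFoataChain_cons.mp hs).2.2 (isFoataChain_cons.mp ht).2.2 y' with heq | hpre
    · exact .inl (by rw [heq])
    · exact .inr (hpre.wB_mul hsym hirr hD (hmin hs) (hmin ht))

end

end TraceMonoid

open TraceMonoid in
theorem r_apply_ge_general (A : Type) (I : A → A → Prop)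
    (hsym : Symmetric I) (hirr : Irreflexive I)
    (φ : Monoid.End (TraceMonoid A I))
    (hcond : ∀ a b c : A, (∃ w : TraceMonoid A I, φ (traceOf A I b) = traceOf A I c * w) →
      (∀ x ∈ content A I (φ (traceOf A I a)), I c x) → I a b) :
    ∀ u v : TraceMonoid A I, rE A I u v ≤ rE A I (φ u) (φ v) := by
  intro u v
  unfold rE
  split_ifs with huv hφ hφ
  · exact le_rfl
  · exact absurd (congrArg φ huv) hφ
  · exact le_top
  refine ENat.natCast_le_natCast.mpr (rNat_le_rNat fun k ⟨P, Lu, Lv, hk, hu, hv⟩ => ?_)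
  rcases eq_or_commonFNFPrefix hcond hsym hirr P hu.1 hv.1 1 with heq | hpre
  · simp only [one_mul, ← hu.2, ← hv.2] at heq
    exact absurd heq hφ
  · simpa only [one_mul, ← hu.2, ← hv.2, hk] using hpre

/-- If an endomorphism `φ` of `M(A,I)` satisfies: for all letters `a,b,c`, `c` a prefix
of `φ(b)` and `c ∼_I φ(a)` imply `(a,b) ∈ I`, then `r(φ(u), φ(v)) ≥ r(u,v)` for all
`u, v`, where `r` measures the longest common prefix of Foata normal forms. -/
theorem r_apply_ge (A : Type) [Fintype A] (I : A → A → Prop)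
    (hsym : Symmetric I) (hirr : Irreflexive I)
    (φ : Monoid.End (TraceMonoid A I))
    (hcond : ∀ a b c : A, (∃ w : TraceMonoid A I, φ (traceOf A I b) = traceOf A I c * w) →
      (∀ x ∈ content A I (φ (traceOf A I a)), I c x) → I a b) :
    ∀ u v : TraceMonoid A I, rE A I u v ≤ rE A I (φ u) (φ v) :=
  r_apply_ge_general A I hsym hirr φ hcond
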